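/- arXiv:2204.10510 — 8 statements merged into one kernel-verified Lean document; each statement's English description precedes it below -/
import Mathlib

section
/- Let α₁, …, α_d be distinct nonzero complex numbers and k ≥ 0 an integer. If g₁, …, g_d are complex polynomials each of degree at most k such that ∑_{j=1}^d g_j(n) α_j^n = 0 for all integers n with 0 ≤ n ≤ (k+1)d − 1, then g_j = 0 for every j. -/
open Polynomial Finset

/-- The shifted-difference operator `g ↦ a * g(X+1) - b * g`. -/
noncomputable def Tshift (a b : ℂ) (g : Polynomial ℂ) : Polynomial ℂ :=
  C a * g.comp (X + 1) - C b * g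

lemma Tshift_eval (a b : ℂ) (g : Polynomial ℂ) (x : ℂ) :
    (Tshift a b g).eval x = a * g.eval (x + 1) - b * g.eval x := by
  simp [Tshift, eval_comp]

lemma comp_X_add_one_natDegree (g : Polynomial ℂ) :
    (g.comp (X + 1)).natDegree = g.natDegree := by
  have h1 : (X + 1 : Polynomial ℂ) = X + C 1 := by simp
  rw [natDegree_comp, h1, natDegree_X_add_C, mul_one]

lemma comp_X_add_one_leadingCoeff (g : Polynomial ℂ) :
    (g.comp (X + 1)).leadingCoeff = g.leadingCoeff := by
  have h1 : (X + 1 : Polynomial ℂ) = X + C 1 := by simp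
  rw [h1, leadingCoeff_comp (by rw [natDegree_X_add_C]; exact one_ne_zero),
    (monic_X_add_C (1:ℂ)).leadingCoeff, one_pow, mul_one]

lemma comp_X_add_one_ne_zero {g : Polynomial ℂ} (hg : g ≠ 0) :
    g.comp (X + 1) ≠ 0 := by
  intro h
  have := comp_X_add_one_leadingCoeff g
  rw [h, leadingCoeff_zero] at this
  exact hg (leadingCoeff_eq_zero.mp this.symm)

lemma comp_X_add_one_degree (g : Polynomial ℂ) :
    (g.comp (X + 1)).degree = g.degree := by
  by_cases hg : g = 0
  · simp [hg]
  rw [degree_eq_natDegree (comp_X_add_one_ne_zero hg), degree_eq_natDegree hg,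
    comp_X_add_one_natDegree]

lemma Tshift_degree_le (a b : ℂ) (g : Polynomial ℂ) :
    (Tshift a b g).degree ≤ g.degree := by
  apply le_trans (degree_sub_le _ _)
  apply max_le
  · exact le_trans (degree_mul_le _ _) (by
      rw [comp_X_add_one_degree]
      calc (C a).degree + g.degree ≤ 0 + g.degree := by
            gcongr; exact degree_C_le
        _ = g.degree := by rw [zero_add])
  · exact le_trans (degree_mul_le _ _) (by
      calc (C b).degree + g.degree ≤ 0 + g.degree := by
            gcongr; exact degree_C_le
        _ = g.degree := by rw [zero_add])

lemma Tshift_inj {a b : ℂ} (hab : a ≠ b) {g : Polynomial ℂ} (h : Tshift a b g = 0) :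
    g = 0 := by
  by_contra hg
  have hco : (g.comp (X + 1)).coeff g.natDegree = g.leadingCoeff := by
    conv_lhs => rw [← comp_X_add_one_natDegree g]
    rw [coeff_natDegree, comp_X_add_one_leadingCoeff]
  have hkey : (Tshift a b g).coeff g.natDegree = (a - b) * g.leadingCoeff := by
    rw [Tshift, coeff_sub, coeff_C_mul, coeff_C_mul, hco, coeff_natDegree]
    ring
  rw [h, coeff_zero] at hkey
  rcases mul_eq_zero.mp hkey.symm with h1 | h2
  · exact hab (sub_eq_zero.mp h1)
  · exact hg (leadingCoeff_eq_zero.mp h2)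

lemma Tshift_same_degree_lt {a : ℂ} {g : Polynomial ℂ} {c : ℕ} (hc : 0 < c)
    (hdeg : g.degree < (c : ℕ)) : (Tshift a a g).degree < ((c - 1 : ℕ) : WithBot ℕ) := by
  by_cases h0 : g.comp (X + 1) - g = 0
  · have : Tshift a a g = 0 := by
      rw [Tshift, ← mul_sub, h0, mul_zero]
    rw [this, degree_zero]
    exact bot_lt_iff_ne_bot.mpr (by simp)
  have hg : g ≠ 0 := by rintro rfl; simp at h0
  have hlt : (g.comp (X + 1) - g).degree < g.degree := by
    have := degree_sub_lt (comp_X_add_one_degree g) (comp_X_add_one_ne_zero hg)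
      (comp_X_add_one_leadingCoeff g)
    rwa [comp_X_add_one_degree] at this
  have hT : Tshift a a g = C a * (g.comp (X + 1) - g) := by rw [Tshift, mul_sub]
  have hTle : (Tshift a a g).degree ≤ (g.comp (X + 1) - g).degree := by
    rw [hT]
    refine le_trans (degree_mul_le _ _) ?_
    calc (C a).degree + (g.comp (X + 1) - g).degree
        ≤ 0 + (g.comp (X + 1) - g).degree := by gcongr; exact degree_C_le
      _ = _ := zero_add _
  have hdg : g.degree = (g.natDegree : WithBot ℕ) := degree_eq_natDegree hg
  have hnd : g.natDegree < c := by
    rw [hdg] at hdeg; exact_mod_cast hdeg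
  calc (Tshift a a g).degree ≤ (g.comp (X + 1) - g).degree := hTle
    _ < g.degree := hlt
    _ ≤ ((c - 1 : ℕ) : WithBot ℕ) := by
        rw [hdg]; exact_mod_cast Nat.le_pred_of_lt hnd

lemma roots_zero {g : Polynomial ℂ} {m : ℕ} (hdeg : g.degree < (m : ℕ))
    (h : ∀ n : ℕ, n < m → g.eval (n : ℂ) = 0) : g = 0 := by
  by_cases hg : g = 0
  · exact hg
  apply eq_zero_of_natDegree_lt_card_of_eval_eq_zero' g
      ((Finset.range m).image (fun n : ℕ => (n : ℂ)))
  · intro i hi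
    simp only [Finset.mem_image, Finset.mem_range] at hi
    obtain ⟨n, hn, rfl⟩ := hi
    exact h n hn
  · rw [Finset.card_image_of_injective _ Nat.cast_injective, Finset.card_range]
    have hdg := degree_eq_natDegree hg
    rw [hdg] at hdeg
    exact_mod_cast hdeg

lemma aux (d : ℕ) (α : Fin d → ℂ) (hα0 : ∀ i, α i ≠ 0) (hinj : Function.Injective α) :
    ∀ N : ℕ, ∀ (s : Finset (Fin d)) (c : Fin d → ℕ) (g : Fin d → Polynomial ℂ),
      (∀ j ∈ s, (g j).degree < ((c j : ℕ) : WithBot ℕ)) → (∑ j ∈ s, c j = N) →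
      (∀ n : ℕ, n < N → ∑ j ∈ s, (g j).eval (n : ℂ) * α j ^ n = 0) →
      ∀ j ∈ s, g j = 0 := by
  intro N
  induction N using Nat.strong_induction_on with
  | _ N IH =>
    intro s c g hdeg hsum hzero j hj
    by_cases hall : ∀ i ∈ s, c i = 0
    · have h1 := hdeg j hj
      rw [hall j hj] at h1
      have h2 : (g j).degree < (0 : WithBot ℕ) := by exact_mod_cast h1
      exact degree_eq_bot.mp (Nat.WithBot.lt_zero_iff.mp h2)
    push_neg at hall
    obtain ⟨a, ha, hca⟩ := hall
    have hcpos : 0 < c a := Nat.pos_of_ne_zero hca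
    have hNpos : 0 < N := by
      rw [← hsum]
      exact lt_of_lt_of_le hcpos (Finset.single_le_sum (fun i _ => Nat.zero_le _) ha)
    set g' : Fin d → Polynomial ℂ := fun i => Tshift (α i) (α a) (g i) with hg'
    set c' : Fin d → ℕ := fun i => if i = a then c a - 1 else c i with hc'
    have hdeg' : ∀ i ∈ s, (g' i).degree < ((c' i : ℕ) : WithBot ℕ) := by
      intro i hi
      by_cases hia : i = a
      · subst hia
        simp only [hc', if_pos rfl, hg']
        exact Tshift_same_degree_lt hcpos (hdeg i hi)
      · simp only [hc', if_neg hia, hg']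
        exact lt_of_le_of_lt (Tshift_degree_le _ _ _) (hdeg i hi)
    have hsum' : ∑ i ∈ s, c' i = N - 1 := by
      have h1 : ∑ i ∈ s, c' i = ∑ i ∈ s.erase a, c i + (c a - 1) := by
        rw [← Finset.sum_erase_add _ c' ha]
        congr 1
        · exact Finset.sum_congr rfl
            (fun i hi => by simp [hc', Finset.ne_of_mem_erase hi])
        · simp [hc']
      have h2 : ∑ i ∈ s.erase a, c i + c a = N := by
        rw [Finset.sum_erase_add _ _ ha, hsum]
      omega
    have hzero' : ∀ n : ℕ, n < N - 1 → ∑ i ∈ s, (g' i).eval (n : ℂ) * α i ^ n = 0 := by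
      intro n hn
      have h1 : ∑ i ∈ s, (g i).eval ((n : ℂ) + 1) * α i ^ (n + 1) = 0 := by
        have := hzero (n + 1) (by omega)
        simpa using this
      have h2 := hzero n (by omega)
      calc ∑ i ∈ s, (g' i).eval (n : ℂ) * α i ^ n
          = ∑ i ∈ s, ((g i).eval ((n : ℂ) + 1) * α i ^ (n + 1)
              - α a * ((g i).eval (n : ℂ) * α i ^ n)) := by
            apply Finset.sum_congr rfl
            intro i _
            show (Tshift (α i) (α a) (g i)).eval (n : ℂ) * α i ^ n = _
            rw [Tshift_eval]
            ring
        _ = (∑ i ∈ s, (g i).eval ((n : ℂ) + 1) * α i ^ (n + 1))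
              - α a * ∑ i ∈ s, (g i).eval (n : ℂ) * α i ^ n := by
            rw [Finset.sum_sub_distrib, Finset.mul_sum]
        _ = 0 := by rw [h1, h2, mul_zero, sub_zero]
    have hzg' : ∀ i ∈ s, g' i = 0 :=
      IH (N - 1) (by omega) s c' g' hdeg' hsum' hzero'
    have hgne : ∀ i ∈ s, i ≠ a → g i = 0 := by
      intro i hi hia
      exact Tshift_inj (fun h => hia (hinj h)) (hzg' i hi)
    have hga : g a = 0 := by
      have heval : ∀ n : ℕ, n < N → (g a).eval (n : ℂ) = 0 := by
        intro n hn
        have hz0 := hzero n hn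
        rw [← Finset.sum_erase_add _ _ ha] at hz0
        have hz : ∑ i ∈ s.erase a, (g i).eval (n : ℂ) * α i ^ n = 0 := by
          apply Finset.sum_eq_zero
          intro i hi
          rw [hgne i (Finset.mem_of_mem_erase hi) (Finset.ne_of_mem_erase hi)]
          simp
        rw [hz, zero_add] at hz0
        exact (mul_eq_zero.mp hz0).resolve_right (pow_ne_zero n (hα0 a))
      have hle : ((c a : ℕ) : WithBot ℕ) ≤ ((N : ℕ) : WithBot ℕ) := by
        exact_mod_cast (Finset.single_le_sum (f := c) (fun i _ => Nat.zero_le _) ha).trans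
          hsum.le
      exact roots_zero (lt_of_lt_of_le (hdeg a ha) hle) heval
    by_cases hja : j = a
    · rw [hja]; exact hga
    · exact hgne j hj hja

/-- If `g₁,…,g_d` are complex polynomials of degree at most `k` and
`∑ g_j(n) α_j^n = 0` for all `0 ≤ n ≤ (k+1)d - 1` (with `α_j` distinct nonzero),
then all `g_j` vanish. -/
theorem stmt0 (d k : ℕ) (hd : 1 ≤ d) (α : Fin d → ℂ)
    (hα0 : ∀ i, α i ≠ 0) (hinj : Function.Injective α)
    (g : Fin d → Polynomial ℂ) (hdeg : ∀ i, (g i).degree ≤ (k : ℕ))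
    (hzero : ∀ n : ℕ, n ≤ (k + 1) * d - 1 → ∑ i, (g i).eval (n : ℂ) * α i ^ n = 0) :
    ∀ i, g i = 0 := by
  intro i
  refine aux d α hα0 hinj ((k + 1) * d) Finset.univ (fun _ => k + 1) g ?_ ?_ ?_ i
    (Finset.mem_univ i)
  · intro j _
    refine lt_of_le_of_lt (hdeg j) ?_
    exact_mod_cast (Nat.lt_succ_self k)
  · simp [Finset.sum_const, Finset.card_univ, mul_comm]
  · intro n hn
    have hd1 : 1 ≤ (k + 1) * d := Nat.one_le_iff_ne_zero.mpr (by positivity)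
    exact hzero n (by omega)
end

section
/- Let f be a polynomial with complex coefficients, α a root of f of multiplicity exactly k+1, and write g(z) = (z−α)^{k+1}/f(z), which is holomorphic and nonzero at α. Then there exists a polynomial r of degree exactly k such that for every integer n ≥ 1, the residue of z^{n−1}/f(z) at z = α equals r(n) α^n. -/
/-!
By Leibniz's rule the `k`-th derivative of `z ^ m * g z` at `α` is
`∑ j, (k choose j) m(m-1)⋯(m-j+1) α ^ (m - j) g⁽ᵏ⁻ʲ⁾(α)`, and for `α ≠ 0` the summand equals
`(k choose j) g⁽ᵏ⁻ʲ⁾(α) / α ^ j · descPochhammer j (m) · α ^ m` even when `m < j`, because then the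
falling factorial vanishes. So the derivative is `P(m) α ^ m` for a polynomial `P` whose top
coefficient `g(α) / α ^ k` is nonzero. Taking `g = 1 / q` and `m = n - 1` gives the residue
`r(n) α ^ n` with `r(X) = P(X - 1) / (k! α)`.
-/

open Polynomial Finset

section Field

variable {K : Type*} [Field K]

theorem degree_sum_smul_descPochhammer {k : ℕ} {b : ℕ → K} (hb : b k ≠ 0) :
    (∑ j ∈ range (k + 1), b j • descPochhammer K j).degree = k := by
  have hdeg : ∀ j, (descPochhammer K j).degree = j := fun j => by
    rw [degree_eq_natDegree (monic_descPochhammer K j).ne_zero, descPochhammer_natDegree]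
  rw [sum_range_succ, degree_add_eq_right_of_degree_lt] <;>
    rw [smul_eq_C_mul, degree_C_mul hb, hdeg]
  refine (degree_sum_le _ _).trans_lt ((Finset.sup_lt_iff (WithBot.bot_lt_coe k)).2 fun j hj => ?_)
  exact (degree_smul_le _ _).trans_lt ((hdeg j).trans_lt (WithBot.coe_lt_coe.2 (mem_range.1 hj)))

theorem descFactorial_mul_pow_sub {α : K} (hα : α ≠ 0) (m j : ℕ) :
    (m.descFactorial j : K) * α ^ (m - j) = m.descFactorial j / α ^ j * α ^ m := by
  rcases le_or_gt j m with hjm | hmj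
  · rw [pow_sub₀ _ hα hjm]
    ring
  · simp [Nat.descFactorial_eq_zero_iff_lt.2 hmj]

end Field

section Leibniz

variable {𝕜 : Type*} [NontriviallyNormedField 𝕜]

noncomputable def leibnizPoly (k : ℕ) (g : 𝕜 → 𝕜) (α : 𝕜) : 𝕜[X] :=
  ∑ j ∈ range (k + 1), (k.choose j * iteratedDeriv (k - j) g α / α ^ j) • descPochhammer 𝕜 j

theorem degree_leibnizPoly {k : ℕ} {g : 𝕜 → 𝕜} {α : 𝕜} (hα : α ≠ 0) (hg : g α ≠ 0) :
    (leibnizPoly k g α).degree = k :=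
  degree_sum_smul_descPochhammer (by simp [hα, hg])

theorem iteratedDeriv_pow_mul_eq_eval_leibnizPoly {k : ℕ} {g : 𝕜 → 𝕜} {α : 𝕜}
    (hα : α ≠ 0) (hg : ContDiffAt 𝕜 k g α) (m : ℕ) :
    iteratedDeriv k (fun z => z ^ m * g z) α = (leibnizPoly k g α).eval (m : 𝕜) * α ^ m := by
  rw [iteratedDeriv_fun_mul (by fun_prop) hg, leibnizPoly, eval_finsetSum, sum_mul]
  refine sum_congr rfl fun j _ => ?_
  rw [iteratedDeriv_pow, eval_smul, descPochhammer_eval_eq_descFactorial, smul_eq_mul]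
  linear_combination (k.choose j * iteratedDeriv (k - j) g α) * descFactorial_mul_pow_sub hα m j

end Leibniz

theorem stmt3_general (k : ℕ) (α : ℂ) (hα : α ≠ 0)
    (q : Polynomial ℂ)
    (hq : q.eval α ≠ 0) :
    ∃ r : Polynomial ℂ, r.degree = (k : WithBot ℕ) ∧
      ∀ n : ℕ, 1 ≤ n →
        (1 / (Nat.factorial k : ℂ)) *
          iteratedDeriv k (fun z : ℂ => z ^ (n - 1) / q.eval z) α
          = r.eval (n : ℂ) * α ^ n := by
  set g : ℂ → ℂ := fun z => (q.eval z)⁻¹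
  have hg : ContDiffAt ℂ k g α := (q.contDiff_aeval k).contDiffAt.inv hq
  refine ⟨C (k.factorial * α : ℂ)⁻¹ * taylor (-1) (leibnizPoly k g α), ?_, fun n hn => ?_⟩
  · rw [degree_C_mul (by simp [hα, Nat.factorial_ne_zero]), degree_taylor,
      degree_leibnizPoly hα (g := g) (inv_ne_zero hq)]
  · obtain ⟨m, rfl⟩ := Nat.exists_eq_add_of_le' hn
    simp_rw [Nat.add_sub_cancel, div_eq_mul_inv]
    rw [iteratedDeriv_pow_mul_eq_eval_leibnizPoly hα hg, eval_mul, eval_C, taylor_eval,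
      Nat.cast_succ, add_neg_cancel_right]
    field_simp
    ring

/-- if `α ≠ 0` is a root of `f` of multiplicity exactly `k+1`, say
`f = (X - α)^(k+1) * q` with `q(α) ≠ 0`, then there is a polynomial `r` of degree
exactly `k` such that for all integers `n ≥ 1` the residue of `z^{n-1}/f(z)` at `α`,
namely `(1/k!) (d/dz)^k (z^{n-1} (z-α)^{k+1}/f(z))|_{z=α} = (1/k!) (d/dz)^k (z^{n-1}/q(z))|_{z=α}`,
equals `r(n) α^n`. -/
theorem stmt3 (f : Polynomial ℂ) (k : ℕ) (α : ℂ) (hα : α ≠ 0)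
    (q : Polynomial ℂ) (hf : f = (Polynomial.X - Polynomial.C α) ^ (k + 1) * q)
    (hq : q.eval α ≠ 0) :
    ∃ r : Polynomial ℂ, r.degree = (k : WithBot ℕ) ∧
      ∀ n : ℕ, 1 ≤ n →
        (1 / (Nat.factorial k : ℂ)) *
          iteratedDeriv k (fun z : ℂ => z ^ (n - 1) / q.eval z) α
          = r.eval (n : ℂ) * α ^ n :=
  stmt3_general k α hα q hq
end

section
/- Let f ∈ ℂ[z] with nonzero constant term, no roots on the unit circle, and let ρ_n = −(1/(2πi)) ∮_{|z|=1+δ} z^{n−1}/f(z) dz where all roots of f outside the closed unit disk have modulus > 1+δ. Then there exists λ > 1 such that ρ_{−n} = o(λ^{−n}) as n → ∞, and if moreover all roots of f have modulus ≠ 1 then there exists 0 < δ' < 1 such that ρ_n = o(δ'^n) as n → ∞. -/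
/-!
On a circle `|z| = R` free of roots of `f`, `|f|` is bounded below, so
`(2πi)⁻¹ ∮_{|z|=R} z^(n-1)/f(z) dz` is `O(Rⁿ)` for all `n ∈ ℤ`. Taking `R = 1 + δ` gives the
decay of `ρ_{-n}`. For `ρ_n`: `f` has finitely many roots, so some annulus `r ≤ |z| ≤ 1 + δ`
with `r < 1` is root-free; by Cauchy's theorem the contour may be shrunk to `|z| = r`, which
gives `ρ_n = O(rⁿ)`.
-/

open Polynomial Filter Asymptotics Metric Complex Real Topology

theorem exists_norm_circleIntegral_zpow_sub_one_div_le {g : ℂ → ℂ} {R : ℝ} (hR : 0 < R)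
    (hg : ContinuousOn g (sphere 0 R)) (hg0 : ∀ z ∈ sphere (0 : ℂ) R, g z ≠ 0) :
    ∃ C : ℝ, ∀ n : ℤ,
      ‖(2 * (π : ℂ) * I)⁻¹ * ∮ z in C(0, R), z ^ (n - 1) / g z‖ ≤ C * R ^ n := by
  obtain ⟨z₀, hz₀, hmin⟩ := (isCompact_sphere (0 : ℂ) R).exists_isMinOn
    (NormedSpace.sphere_nonempty.2 hR.le) hg.norm
  have hm : 0 < ‖g z₀‖ := norm_pos_iff.2 (hg0 z₀ hz₀)
  refine ⟨‖g z₀‖⁻¹, fun n => ?_⟩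
  have hbound : ∀ z ∈ sphere (0 : ℂ) R, ‖z ^ (n - 1) / g z‖ ≤ R ^ (n - 1) / ‖g z₀‖ := by
    intro z hz
    rw [norm_div, norm_zpow, mem_sphere_zero_iff_norm.1 hz]
    exact div_le_div_of_nonneg_left (by positivity) hm (hmin hz)
  calc ‖(2 * (π : ℂ) * I)⁻¹ * ∮ z in C(0, R), z ^ (n - 1) / g z‖
      ≤ R * (R ^ (n - 1) / ‖g z₀‖) :=
        circleIntegral.norm_two_pi_i_inv_smul_integral_le_of_norm_le_const hR.le hbound
    _ = ‖g z₀‖⁻¹ * R ^ n := by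
        rw [zpow_sub_one₀ hR.ne']
        field_simp

namespace Polynomial

theorem exists_annulus_eval_ne_zero (f : ℂ[X]) {R : ℝ} (hR : 0 < R)
    (hf : ∀ z : ℂ, ‖z‖ = R → f.eval z ≠ 0) :
    ∃ r, 0 < r ∧ r < R ∧ ∀ z : ℂ, r ≤ ‖z‖ → ‖z‖ ≤ R → f.eval z ≠ 0 := by
  have hf0 : f ≠ 0 := fun h => hf R (by simp [hR.le]) (by simp [h])
  have hroots : ∀ᶠ r in 𝓝[<] R, ∀ z ∈ {z | f.IsRoot z}, ‖z‖ < R → ‖z‖ < r := by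
    refine (eventually_all_finite (finite_setOfPred_isRoot hf0)).2 fun z _ => ?_
    by_cases hz : ‖z‖ < R
    · exact ((eventually_gt_nhds hz).filter_mono nhdsWithin_le_nhds).mono fun _ hr _ => hr
    · exact Eventually.of_forall fun _ h => absurd h hz
  obtain ⟨r, hr, hr0, hrR⟩ := (hroots.and (Ioo_mem_nhdsLT hR)).exists
  refine ⟨r, hr0, hrR, fun z hrz hzR hz => ?_⟩
  rcases hzR.lt_or_eq with hzR | hzR
  · exact (hr z hz hzR).not_ge hrz
  · exact hf z hzR hz

theorem circleIntegral_zpow_div_eval_eq {f : ℂ[X]} {r R : ℝ} (hr : 0 < r) (hrR : r ≤ R)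
    (hf : ∀ z : ℂ, r ≤ ‖z‖ → ‖z‖ ≤ R → f.eval z ≠ 0) (k : ℤ) :
    ∮ z in C(0, R), z ^ k / f.eval z = ∮ z in C(0, r), z ^ k / f.eval z := by
  have hdiff : ∀ z ∈ closedBall (0 : ℂ) R \ ball 0 r,
      DifferentiableAt ℂ (fun z => z ^ k / f.eval z) z := by
    rintro z ⟨hzR, hzr⟩
    rw [mem_closedBall_zero_iff] at hzR
    rw [mem_ball_zero_iff, not_lt] at hzr
    have hz0 : z ≠ 0 := norm_pos_iff.1 (hr.trans_le hzr)
    exact (differentiableAt_zpow.2 (Or.inl hz0)).div f.differentiableAt (hf z hzr hzR)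
  refine circleIntegral_eq_of_differentiable_on_annulus_off_countable hr hrR Set.countable_empty
    (fun z hz => (hdiff z hz).continuousAt.continuousWithinAt) ?_
  rintro z ⟨⟨hzR, hzr⟩, -⟩
  exact hdiff z ⟨ball_subset_closedBall hzR, fun h => hzr (ball_subset_closedBall h)⟩

end Polynomial

theorem isLittleO_norm_pow_of_norm_le_mul_pow {E : Type*} [SeminormedAddCommGroup E] {u : ℕ → E}
    {a b C : ℝ} (ha : 0 ≤ a) (hab : a < b) (hu : ∀ n, ‖u n‖ ≤ C * a ^ n) :
    (fun n => ‖u n‖) =o[atTop] fun n => b ^ n := by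
  have hO : u =O[atTop] fun n => a ^ n := .of_bound C <| .of_forall fun n => by
    rw [norm_pow, Real.norm_of_nonneg ha]
    exact hu n
  exact hO.norm_left.trans_isLittleO (isLittleO_pow_pow_of_lt_left ha hab)

theorem stmt6_general (f : Polynomial ℂ)
    (hcirc : ∀ z : ℂ, ‖z‖ = 1 → f.eval z ≠ 0)
    (δ : ℝ) (hδ : 0 < δ)
    (hout : ∀ z : ℂ, f.eval z = 0 → 1 < ‖z‖ → 1 + δ < ‖z‖)
    (ρ : ℤ → ℂ)
    (hρ : ∀ n : ℤ, ρ n =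
      -((2 * (Real.pi : ℂ) * Complex.I)⁻¹ *
        ∮ z in C(0, 1 + δ), z ^ (n - 1) / f.eval z)) :
    (∃ lam : ℝ, 1 < lam ∧
      (fun n : ℕ => ‖ρ (-(n : ℤ))‖) =o[atTop] fun n : ℕ => lam⁻¹ ^ n) ∧
    ((∀ z : ℂ, f.eval z = 0 → ‖z‖ ≠ 1) →
      ∃ δ' : ℝ, 0 < δ' ∧ δ' < 1 ∧
        (fun n : ℕ => ‖ρ (n : ℤ)‖) =o[atTop] fun n : ℕ => δ' ^ n) := by
  obtain ⟨r, hr0, hr1, hinner⟩ := f.exists_annulus_eval_ne_zero one_pos hcirc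
  have hannulus (z : ℂ) (hrz : r ≤ ‖z‖) (hzR : ‖z‖ ≤ 1 + δ) : f.eval z ≠ 0 := fun hz =>
    (le_or_gt ‖z‖ 1).elim (hinner z hrz · hz) fun h1 => (hout z hz h1).not_ge hzR
  have hsphere {s : ℝ} (hrs : r ≤ s) (hs : s ≤ 1 + δ) (z : ℂ) (hz : z ∈ sphere 0 s) :
      f.eval z ≠ 0 := by
    rw [mem_sphere_zero_iff_norm] at hz
    exact hannulus z (hz ▸ hrs) (hz ▸ hs)
  refine ⟨?_, fun _ => ?_⟩
  · obtain ⟨C, hC⟩ := exists_norm_circleIntegral_zpow_sub_one_div_le (by positivity)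
      f.continuous.continuousOn (hsphere (by linarith) le_rfl)
    refine ⟨1 + δ / 2, by linarith, isLittleO_norm_pow_of_norm_le_mul_pow (a := (1 + δ)⁻¹)
      (C := C) (by positivity) (inv_strictAnti₀ (by positivity) (by linarith)) fun n => ?_⟩
    rw [hρ, norm_neg, inv_pow, ← zpow_natCast, ← zpow_neg]
    exact hC _
  · obtain ⟨C, hC⟩ := exists_norm_circleIntegral_zpow_sub_one_div_le hr0
      f.continuous.continuousOn (hsphere le_rfl (by linarith))
    refine ⟨(r + 1) / 2, by linarith, by linarith,
      isLittleO_norm_pow_of_norm_le_mul_pow (C := C) hr0.le (by linarith) fun n => ?_⟩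
    rw [hρ, norm_neg, circleIntegral_zpow_div_eval_eq hr0 (by linarith) hannulus]
    exact_mod_cast hC n

/-- for `f` with nonzero constant term and no root on the unit circle,
with all roots of modulus `> 1` actually of modulus `> 1 + δ`, and
`ρ_n = -(2πi)⁻¹ ∮_{|z|=1+δ} z^{n-1}/f(z) dz`: there is `λ > 1` with
`ρ_{-n} = o(λ^{-n})` as `n → ∞`; and if moreover every root has modulus `≠ 1`
then there is `0 < δ' < 1` with `ρ_n = o(δ'^n)` as `n → ∞`. -/
theorem stmt6 (f : Polynomial ℂ) (hf : f ≠ 0) (hf0 : f.coeff 0 ≠ 0)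
    (hcirc : ∀ z : ℂ, ‖z‖ = 1 → f.eval z ≠ 0)
    (δ : ℝ) (hδ : 0 < δ)
    (hout : ∀ z : ℂ, f.eval z = 0 → 1 < ‖z‖ → 1 + δ < ‖z‖)
    (ρ : ℤ → ℂ)
    (hρ : ∀ n : ℤ, ρ n =
      -((2 * (Real.pi : ℂ) * Complex.I)⁻¹ *
        ∮ z in C(0, 1 + δ), z ^ (n - 1) / f.eval z)) :
    (∃ lam : ℝ, 1 < lam ∧
      (fun n : ℕ => ‖ρ (-(n : ℤ))‖) =o[atTop] fun n : ℕ => lam⁻¹ ^ n) ∧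
    ((∀ z : ℂ, f.eval z = 0 → ‖z‖ ≠ 1) →
      ∃ δ' : ℝ, 0 < δ' ∧ δ' < 1 ∧
        (fun n : ℕ => ‖ρ (n : ℤ)‖) =o[atTop] fun n : ℕ => δ' ^ n) :=
  stmt6_general f hcirc δ hδ hout ρ hρ
end

section
/- Let (ρ_n)_{n∈ℤ} be a real sequence and A₀, …, A_D integers such that ∑_{j=0}^{D}(−A_j)ρ_{j+n} = 𝟙_{n=0} for all n ∈ ℤ, and assume (ε_m) is bounded and ∑_{j∈ℤ}|ρ_{ℓ−j}| |ε_j| < ∞ for every ℓ. Define s_m = −∑_{j=0}^{D} A_j ε_{m+j}. Then ε_m = ∑_{j∈ℤ} ρ_{m−j} s_j for every m ∈ ℤ. -/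
open Finset

/-- inversion formula. If `ρ` is a two-sided fundamental solution,
`∑_{j=0}^D (-A_j) ρ_{j+n} = 𝟙_{n=0}`, `ε` is bounded with
`∑_j |ρ_{ℓ-j}| |ε_j| < ∞` for each `ℓ`, and `s_m = -∑_{j=0}^D A_j ε_{m+j}`,
then `ε_m = ∑_{j∈ℤ} ρ_{m-j} s_j` for every `m`. -/

theorem stmt8 (D : ℕ) (A : ℕ → ℤ) (ρ : ℤ → ℝ)
    (hinv : ∀ n : ℤ, ∑ j ∈ Finset.range (D + 1), (-(A j) : ℝ) * ρ ((j : ℤ) + n) =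
      if n = 0 then 1 else 0)
    (ε : ℤ → ℝ) (hbd : ∃ C : ℝ, ∀ m : ℤ, |ε m| ≤ C)
    (hsum : ∀ ℓ : ℤ, Summable fun j : ℤ => |ρ (ℓ - j)| * |ε j|)
    (s : ℤ → ℝ)
    (hs : ∀ m : ℤ, s m = -∑ j ∈ Finset.range (D + 1), (A j : ℝ) * ε (m + j)) :
    ∀ m : ℤ, Summable (fun j : ℤ => ρ (m - j) * s j) ∧
      ε m = ∑' j : ℤ, ρ (m - j) * s j := by
  intro m
  set F : ℕ → ℤ → ℝ := fun k i => (-(A k) : ℝ) * ρ ((k : ℤ) + (m - i)) * ε i with hF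
  have hFsum : ∀ k, Summable (F k) := by
    intro k
    have h1 : Summable fun i : ℤ => |(-(A k) : ℝ)| * (|ρ ((m + k) - i)| * |ε i|) :=
      (hsum (m + k)).mul_left _
    refine Summable.of_abs (h1.congr fun i => ?_)
    have h2 : (m + (k : ℤ)) - i = (k : ℤ) + (m - i) := by ring
    rw [h2]
    simp [hF, abs_mul, mul_assoc]
  -- summability of each shifted term
  set H : ℕ → ℤ → ℝ := fun k j => (-(A k) : ℝ) * ρ (m - j) * ε (j + k) with hH
  have hHF : ∀ k j, H k j = F k (j + (k : ℤ)) := by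
    intro k j
    have : (k : ℤ) + (m - (j + k)) = m - j := by ring
    simp [hH, hF, this]
  have hHsum : ∀ k, Summable (H k) := by
    intro k
    have := (Equiv.addRight (k : ℤ)).summable_iff.mpr (hFsum k)
    exact this.congr (fun j => (hHF k j).symm)
  -- the target function equals the finite sum of H k
  have htgt : ∀ j : ℤ, ρ (m - j) * s j = ∑ k ∈ Finset.range (D + 1), H k j := by
    intro j
    rw [hs j, mul_neg, Finset.mul_sum, ← Finset.sum_neg_distrib]
    refine Finset.sum_congr rfl fun k _ => ?_
    simp [hH]; ring
  have hsummable : Summable (fun j : ℤ => ρ (m - j) * s j) := by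
    refine (summable_sum (fun k _ => hHsum k)).congr fun j => (htgt j).symm
  refine ⟨hsummable, ?_⟩
  have h3 : ∑' j : ℤ, ρ (m - j) * s j
      = ∑ k ∈ Finset.range (D + 1), ∑' j : ℤ, H k j := by
    rw [← Summable.tsum_finsetSum (fun k _ => hHsum k)]
    exact tsum_congr htgt
  have h4 : ∀ k, ∑' j : ℤ, H k j = ∑' i : ℤ, F k i := by
    intro k
    rw [← (Equiv.addRight (k : ℤ)).tsum_eq (F k)]
    exact tsum_congr (fun j => hHF k j)
  have h5 : ∑ k ∈ Finset.range (D + 1), ∑' i : ℤ, F k i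
      = ∑' i : ℤ, ∑ k ∈ Finset.range (D + 1), F k i := (Summable.tsum_finsetSum (fun k _ => hFsum k)).symm
  have h6 : ∀ i : ℤ, ∑ k ∈ Finset.range (D + 1), F k i
      = (if i = m then ε m else 0) := by
    intro i
    have : ∑ k ∈ Finset.range (D + 1), F k i
        = (∑ k ∈ Finset.range (D + 1), (-(A k) : ℝ) * ρ ((k : ℤ) + (m - i))) * ε i := by
      rw [Finset.sum_mul]
    rw [this, hinv (m - i)]
    by_cases h : i = m
    · simp [h]
    · have : ¬ (m - i = 0) := fun hh => h (by omega)
      simp [this, h]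
  rw [h3]
  simp_rw [h4]
  rw [h5]
  rw [tsum_congr h6, tsum_ite_eq]
end

section
/- Let F(X) = ∑_{m=0}^∞ a_m X^m be a power series with radius of convergence R > 0, and let x₁, …, x_r be pairwise distinct nonzero complex numbers with |x_i| < R for all i. Then ∑_{m=0}^∞ a_m H_r^{(m)}(x₁, …, x_r) = ∑_{i=1}^{r} (∏_{j≠i} x_i/(x_i − x_j)) F(x_i), where H_r^{(m)} is the complete homogeneous symmetric polynomial of degree m, and the left-hand series converges absolutely. -/
/-!
The generating function `∑ₘ H_r^{(m)}(x) Xᵐ` is `∏ᵢ 1 / (1 - xᵢ X)`, whose partial fraction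
decomposition `∑ᵢ cᵢ / (1 - xᵢ X)` with `cᵢ = ∏_{j ≠ i} xᵢ / (xᵢ - xⱼ)` gives
`H_r^{(m)}(x) = ∑ᵢ cᵢ xᵢᵐ`. Cleared of denominators, the decomposition says that the polynomial
`∑ᵢ cᵢ ∏_{j ≠ i} (1 - xⱼ X) - 1` vanishes; it has degree `< r` and vanishes at the `r` distinct
points `xₖ⁻¹`. The series `∑ₘ aₘ H_r^{(m)}(x)` is then a finite linear combination of the
absolutely convergent series `F(xᵢ)`.
-/

open Finset

/-- The complete homogeneous symmetric polynomial `H_r^{(m)}` evaluated at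
`x : Fin r → ℂ`. -/
noncomputable def hpolyC (r m : ℕ) (x : Fin r → ℂ) : ℂ :=
  ∑ c ∈ Finset.univ.filter (fun c : Fin r → Fin (m + 1) => ∑ i, (c i : ℕ) = m),
    ∏ i, x i ^ (c i : ℕ)

namespace Polynomial

variable {K ι : Type*} [Field K]

theorem natDegree_prod_one_sub_C_mul_X_le (s : Finset ι) (x : ι → K) :
    (∏ j ∈ s, (1 - C (x j) * X)).natDegree ≤ #s := by
  refine (natDegree_prod_le _ _).trans ?_
  have : ∀ j ∈ s, (1 - C (x j) * X).natDegree ≤ 1 := fun j _ =>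
    (natDegree_sub_le _ _).trans <| max_le (by simp) ((natDegree_C_mul_le _ _).trans (by simp))
  simpa using sum_le_card_nsmul s _ 1 this

theorem sum_C_mul_prod_erase_one_sub_C_mul_X [Fintype ι] [DecidableEq ι] [Nonempty ι]
    {x : ι → K} (hinj : Function.Injective x) (h0 : ∀ i, x i ≠ 0) :
    ∑ i, C (∏ j ∈ univ.erase i, x i / (x i - x j)) *
      ∏ j ∈ univ.erase i, (1 - C (x j) * X) = 1 := by
  set q : K[X] := ∑ i, C (∏ j ∈ univ.erase i, x i / (x i - x j)) *
      ∏ j ∈ univ.erase i, (1 - C (x j) * X)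
  have hdeg : q.natDegree < Fintype.card ι := by
    have hpos := Fintype.card_pos (α := ι)
    refine lt_of_le_of_lt (natDegree_sum_le_of_forall_le _ _ (n := Fintype.card ι - 1)
      fun i _ => (natDegree_C_mul_le _ _).trans ?_) (by omega)
    simpa [card_erase_of_mem] using natDegree_prod_one_sub_C_mul_X_le (univ.erase i) x
  have heval : ∀ k, q.eval (x k)⁻¹ = 1 := by
    intro k
    rw [eval_finsetSum, sum_eq_single k]
    · rw [eval_mul, eval_C, eval_prod, ← prod_mul_distrib]
      refine prod_eq_one fun j hj => ?_
      have hkj : x k - x j ≠ 0 := sub_ne_zero.mpr (hinj.ne (ne_of_mem_erase hj).symm)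
      simp only [eval_sub, eval_one, eval_mul, eval_C, eval_X]
      field_simp [h0 k]
    · intro i _ hik
      rw [eval_mul, eval_prod]
      refine mul_eq_zero_of_right _ (prod_eq_zero (mem_erase.mpr ⟨Ne.symm hik, mem_univ k⟩) ?_)
      simp [mul_inv_cancel₀ (h0 k)]
    · exact fun h => absurd (mem_univ k) h
  refine eq_of_degrees_lt_of_eval_index_eq (s := univ) (v := fun i => (x i)⁻¹)
    (fun i _ j _ h => hinj (inv_injective h)) ?_ ?_ fun k _ => by simp [heval k]
  · exact degree_le_natDegree.trans_lt (by exact_mod_cast hdeg)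
  · rw [degree_one]; exact_mod_cast Fintype.card_pos

end Polynomial

namespace PowerSeries

theorem one_sub_C_mul_X_mul_mk_pow {R : Type*} [CommRing R] (y : R) :
    (1 - C y * X) * mk (y ^ ·) = 1 := by
  ext n
  rw [sub_mul, one_mul, mul_assoc, map_sub, coeff_C_mul]
  cases n with
  | zero => simp
  | succ n => simp [coeff_succ_X_mul, pow_succ, mul_comm]

theorem prod_mk_pow_eq_sum {K ι : Type*} [Field K] [Fintype ι] [DecidableEq ι] [Nonempty ι]
    {x : ι → K} (hinj : Function.Injective x) (h0 : ∀ i, x i ≠ 0) :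
    ∏ i, mk (x i ^ ·) = ∑ i, C (∏ j ∈ univ.erase i, x i / (x i - x j)) * mk (x i ^ ·) := by
  have hpf := congrArg (Polynomial.coeToPowerSeries.ringHom (R := K))
    (Polynomial.sum_C_mul_prod_erase_one_sub_C_mul_X hinj h0)
  simp only [map_sum, map_mul, map_prod Polynomial.coeToPowerSeries.ringHom, map_sub, map_one,
    Polynomial.coeToPowerSeries.ringHom_apply, Polynomial.coe_C, Polynomial.coe_X] at hpf
  rw [← one_mul (∏ i, _), ← hpf, sum_mul]
  refine sum_congr rfl fun i _ => ?_
  have hinv : (∏ j ∈ univ.erase i, (1 - C (x j) * X)) * ∏ j ∈ univ.erase i, mk (x j ^ ·) = 1 := by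
    rw [← prod_mul_distrib]
    exact prod_eq_one fun j _ => one_sub_C_mul_X_mul_mk_pow (x j)
  rw [← mul_prod_erase _ _ (mem_univ i)]
  linear_combination (C (∏ j ∈ univ.erase i, x i / (x i - x j)) * mk (x i ^ ·)) * hinv

end PowerSeries

theorem PowerSeries.coeff_prod_mk_pow_eq_hpolyC (r m : ℕ) (x : Fin r → ℂ) :
    coeff m (∏ i, mk (x i ^ ·)) = hpolyC r m x := by
  rw [coeff_prod]
  simp only [coeff_mk]
  refine sum_bij' (fun l hl k => ⟨l k, ?_⟩)
    (fun c _ => Finsupp.equivFunOnFinite.symm fun k => (c k : ℕ)) ?_ ?_ ?_ ?_ ?_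
  · have hsum := (mem_finsuppAntidiag.mp hl).1
    have : l k ≤ m := hsum ▸ single_le_sum (fun _ _ => Nat.zero_le _) (mem_univ k)
    omega
  · intro l hl
    simpa using (mem_finsuppAntidiag.mp hl).1
  · intro c hc
    simpa [mem_finsuppAntidiag] using hc
  · intro l _
    ext k
    simp
  · intro c _
    ext k
    simp
  · intro l _
    rfl

theorem hpolyC_eq_sum (r m : ℕ) (hr : 1 ≤ r) (x : Fin r → ℂ) (hinj : Function.Injective x)
    (h0 : ∀ i, x i ≠ 0) :
    hpolyC r m x = ∑ i, (∏ j ∈ univ.erase i, x i / (x i - x j)) * x i ^ m := by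
  have : Nonempty (Fin r) := ⟨⟨0, hr⟩⟩
  simp [← PowerSeries.coeff_prod_mk_pow_eq_hpolyC, PowerSeries.prod_mk_pow_eq_sum hinj h0]

section

variable {ι 𝕜 : Type*} [Fintype ι] [NormedField 𝕜]

theorem summable_norm_mul_sum_mul_pow (a : ℕ → 𝕜) (c z : ι → 𝕜)
    (h : ∀ i, Summable fun m => ‖a m‖ * ‖z i‖ ^ m) :
    Summable fun m => ‖a m * ∑ i, c i * z i ^ m‖ := by
  refine .of_nonneg_of_le (fun m => norm_nonneg _) (fun m => ?_)
    (summable_sum (s := univ) fun i _ => (h i).mul_left ‖c i‖)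
  calc ‖a m * ∑ i, c i * z i ^ m‖ ≤ ‖a m‖ * ∑ i, ‖c i * z i ^ m‖ := by
        rw [norm_mul]; gcongr; exact norm_sum_le _ _
    _ = ∑ i, ‖c i‖ * (‖a m‖ * ‖z i‖ ^ m) := by
        rw [mul_sum]; simp only [norm_mul, norm_pow]; ring_nf

theorem tsum_mul_sum_mul_pow (a : ℕ → 𝕜) (c z : ι → 𝕜)
    (h : ∀ i, Summable fun m => a m * z i ^ m) :
    ∑' m, a m * ∑ i, c i * z i ^ m = ∑ i, c i * ∑' m, a m * z i ^ m := by
  simp_rw [mul_sum, mul_left_comm (a _)]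
  rw [Summable.tsum_finsetSum fun i _ => (h i).mul_left (c i)]
  simp_rw [tsum_mul_left]

end

theorem stmt10_general (a : ℕ → ℂ) (R : ℝ)
    (hconv : ∀ z : ℂ, ‖z‖ < R →
      Summable fun m : ℕ => ‖a m‖ * ‖z‖ ^ m)
    (r : ℕ) (hr : 1 ≤ r) (x : Fin r → ℂ)
    (hinj : Function.Injective x) (h0 : ∀ i, x i ≠ 0)
    (hlt : ∀ i, ‖x i‖ < R) :
    Summable (fun m : ℕ => ‖a m * hpolyC r m x‖) ∧
    ∑' m : ℕ, a m * hpolyC r m x =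
      ∑ i, (∏ j ∈ Finset.univ.erase i, x i / (x i - x j)) *
        ∑' m : ℕ, a m * x i ^ m := by
  have hnorm : ∀ i, Summable fun m => ‖a m‖ * ‖x i‖ ^ m := fun i => hconv (x i) (hlt i)
  simp only [hpolyC_eq_sum r _ hr x hinj h0]
  exact ⟨summable_norm_mul_sum_mul_pow a _ x hnorm, tsum_mul_sum_mul_pow a _ x fun i =>
    .of_norm (by simpa only [norm_mul, norm_pow] using hnorm i)⟩

/-- for a power series `F(X) = ∑ a_m X^m` converging absolutely on
`|z| < R` and pairwise distinct nonzero `x_i` with `|x_i| < R`,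
`∑_m a_m H_r^{(m)}(x₁,…,x_r) = ∑_i (∏_{j≠i} x_i/(x_i-x_j)) F(x_i)`, the left-hand
series converging absolutely. -/
theorem stmt10 (a : ℕ → ℂ) (R : ℝ) (hR : 0 < R)
    (hconv : ∀ z : ℂ, ‖z‖ < R →
      Summable fun m : ℕ => ‖a m‖ * ‖z‖ ^ m)
    (r : ℕ) (hr : 1 ≤ r) (x : Fin r → ℂ)
    (hinj : Function.Injective x) (h0 : ∀ i, x i ≠ 0)
    (hlt : ∀ i, ‖x i‖ < R) :
    Summable (fun m : ℕ => ‖a m * hpolyC r m x‖) ∧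
    ∑' m : ℕ, a m * hpolyC r m x =
      ∑ i, (∏ j ∈ Finset.univ.erase i, x i / (x i - x j)) *
        ∑' m : ℕ, a m * x i ^ m :=
  stmt10_general a R hconv r hr x hinj h0 hlt
end

section
/- Let (r_n)_{n≥0} be a sequence of nonnegative real numbers, nonzero for all large n, such that lim_{n→∞} r_{n+1}/r_n = L ∈ (0,1). Let a > 1 be an integer with 1/a < L, and set A = ⌊a/2⌋. Then for every integer N ≥ 0, the set { ∑_{n=N}^∞ b_n r_n : b_n ∈ ℤ, |b_n| ≤ A for all n ≥ N } contains a nondegenerate closed interval containing 0 in its interior. -/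
/-!
Greedy expansion. Past some index the ratios exceed `q = 1/(2A+1)`, so every tail dominates a
geometric series and `r_k ≤ 2A · ∑_{j>k} r_j`. Then from `|x| ≤ A · ∑_{j≥k} r_j` one digit
`|b| ≤ A` brings the remainder to `|x - b r_k| ≤ A · ∑_{j>k} r_j`; iterating, the remainders tend
to `0`, so every `y` with `|y| ≤ A · ∑_{j≥M} r_j` is a digit series. Digits below `M` are `0`.
-/

open Filter

-- Take `b = ±A` when `|x| ≥ Aρ`, otherwise round `x / ρ`, which costs at most `ρ / 2 ≤ s`.
lemma exists_int_abs_le_abs_sub_mul_le {A : ℕ} {x ρ s : ℝ} (hρ : 0 ≤ ρ) (hρs : ρ ≤ 2 * s)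
    (hx : |x| ≤ A * ρ + s) : ∃ b : ℤ, |b| ≤ A ∧ |x - b * ρ| ≤ s := by
  rw [abs_le] at hx
  rcases le_or_gt (A * ρ) x with hxA | hxA
  · exact ⟨A, by simp, by rw [abs_le]; push_cast; constructor <;> linarith⟩
  rcases le_or_gt x (-(A * ρ)) with hxA' | hxA'
  · exact ⟨-A, by simp, by rw [abs_le]; push_cast; constructor <;> linarith⟩
  have hρ0 : 0 < ρ := pos_of_mul_pos_right (by linarith : (0 : ℝ) < A * ρ) (Nat.cast_nonneg A)
  set t := x / ρ
  have ht : -(A : ℝ) < t ∧ t < A :=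
    ⟨by rw [lt_div_iff₀ hρ0]; linarith, by rw [div_lt_iff₀ hρ0]; linarith⟩
  refine ⟨round t, ?_, ?_⟩
  · have hlo : -((A : ℤ) : ℝ) - 1 < round t := by
      linarith [sub_half_lt_round t, (by push_cast; ring : -((A : ℤ) : ℝ) = -(A : ℝ))]
    have hhi : (round t : ℝ) < (A : ℤ) + 1 := by
      linarith [round_le_add_half t, (by push_cast; ring : ((A : ℤ) : ℝ) = (A : ℝ))]
    have hlo' : -(A : ℤ) - 1 < round t := by exact_mod_cast hlo
    have hhi' : round t < (A : ℤ) + 1 := by exact_mod_cast hhi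
    exact abs_le.2 ⟨by omega, by omega⟩
  · calc |x - round t * ρ| = |t - round t| * ρ := by
          rw [← abs_of_pos hρ0, ← abs_mul, abs_of_pos hρ0, sub_mul, div_mul_cancel₀ x hρ0.ne']
      _ ≤ 1 / 2 * ρ := by gcongr; exact abs_sub_round t
      _ ≤ s := by linarith

lemma mul_le_tsum_of_mul_le_succ {w : ℕ → ℝ} {q : ℝ} (hq0 : 0 ≤ q) (hq1 : q < 1)
    (hw : Summable w) (h : ∀ n, q * w n ≤ w (n + 1)) (k : ℕ) :
    q / (1 - q) * w k ≤ ∑' j, w (j + (k + 1)) := by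
  have hgeom : ∀ j, q ^ j * (q * w k) ≤ w (j + (k + 1)) := by
    intro j
    induction j with
    | zero => simpa using h k
    | succ j ih =>
      calc q ^ (j + 1) * (q * w k) = q * (q ^ j * (q * w k)) := by ring
        _ ≤ q * w (j + (k + 1)) := by gcongr
        _ ≤ w (j + 1 + (k + 1)) := by rw [add_right_comm]; exact h _
  have hsum := (hasSum_geometric_of_lt_one hq0 hq1).mul_right (q * w k)
  calc q / (1 - q) * w k = (1 - q)⁻¹ * (q * w k) := by ring
    _ ≤ ∑' j, w (j + (k + 1)) :=
      hasSum_le hgeom hsum ((summable_nat_add_iff (k + 1)).2 hw).hasSum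

lemma le_two_mul_tsum_of_inv_mul_le {w : ℕ → ℝ} {A : ℕ} (hA : 0 < A) (hw : Summable w)
    (h : ∀ n, (2 * A + 1 : ℝ)⁻¹ * w n ≤ w (n + 1)) (k : ℕ) :
    w k ≤ 2 * A * ∑' j, w (j + (k + 1)) := by
  have hA' : (0 : ℝ) < A := by exact_mod_cast hA
  have hq1 : (2 * A + 1 : ℝ)⁻¹ < 1 := inv_lt_one_of_one_lt₀ (by linarith)
  have key := mul_le_tsum_of_mul_le_succ (by positivity) hq1 hw h k
  have hq : (2 * A + 1 : ℝ)⁻¹ / (1 - (2 * A + 1 : ℝ)⁻¹) = (2 * (A : ℝ))⁻¹ := by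
    field_simp
    ring
  rw [hq] at key
  calc w k = 2 * A * ((2 * (A : ℝ))⁻¹ * w k) := by field_simp
    _ ≤ 2 * A * ∑' j, w (j + (k + 1)) := by gcongr


theorem exists_hasSum_digits_of_le_two_mul_tsum {w : ℕ → ℝ} {A : ℕ} (hw0 : ∀ n, 0 ≤ w n)
    (hw : Summable w) (hdom : ∀ k, w k ≤ 2 * A * ∑' j, w (j + (k + 1)))
    {y : ℝ} (hy : |y| ≤ A * ∑' n, w n) :
    ∃ b : ℕ → ℤ, (∀ n, |b n| ≤ A) ∧ HasSum (fun n => b n * w n) y := by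
  set T : ℕ → ℝ := fun k => ∑' j, w (j + k)
  have hT : ∀ k, T k = w k + T (k + 1) := fun k => by
    simpa [T, add_assoc, add_comm 1] using ((summable_nat_add_iff k).2 hw).tsum_eq_zero_add
  have hstep : ∀ k x, ∃ c : ℤ, |c| ≤ A ∧ (|x| ≤ A * T k → |x - c * w k| ≤ A * T (k + 1)) := by
    intro k x
    by_cases hx : |x| ≤ A * T k
    · obtain ⟨c, hc, hxc⟩ := exists_int_abs_le_abs_sub_mul_le (hw0 k)
        (by linarith [hdom k] : w k ≤ 2 * (A * T (k + 1))) (by rw [hT k, mul_add] at hx; exact hx)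
      exact ⟨c, hc, fun _ => hxc⟩
    · exact ⟨0, by simp, fun h => absurd h hx⟩
  choose c hc using hstep
  -- the remainder after the first `k` greedy digits
  let g : ℕ → ℝ := fun k => Nat.rec y (fun k x => x - c k x * w k) k
  have hg : ∀ k, |g k| ≤ A * T k := by
    intro k
    induction k with
    | zero => simpa [g, T] using hy
    | succ k ih => exact (hc k (g k)).2 ih
  have hpartial : ∀ K, ∑ k ∈ Finset.range K, (c k (g k) : ℝ) * w k = y - g K := by
    intro K
    induction K with
    | zero => simp [g]
    | succ K ih => rw [Finset.sum_range_succ, ih]; simp only [g]; ring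
  have hg0 : Tendsto g atTop (nhds 0) := by
    refine squeeze_zero_norm hg ?_
    simpa using (tendsto_sum_nat_add w).const_mul (A : ℝ)
  have hsum : Summable fun n => (c n (g n) : ℝ) * w n := by
    refine (hw.mul_left (A : ℝ)).of_norm_bounded fun n => ?_
    rw [norm_mul, Real.norm_of_nonneg (hw0 n), Real.norm_eq_abs, ← Int.cast_abs]
    gcongr
    · exact hw0 n
    · exact_mod_cast (hc n (g n)).1
  refine ⟨fun n => c n (g n), fun n => (hc n (g n)).1, hsum.hasSum_iff_tendsto_nat.2 ?_⟩
  simpa [hpartial] using (tendsto_const_nhds (x := y)).sub hg0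

lemma exists_hasSum_digits_of_shift {w : ℕ → ℝ} {A : ℕ} {y : ℝ} (d : ℕ) {b : ℕ → ℤ}
    (hb : ∀ n, |b n| ≤ A) (hsum : HasSum (fun n => b n * w (d + n)) y) :
    ∃ b' : ℕ → ℤ, (∀ n, |b' n| ≤ A) ∧ HasSum (fun n => b' n * w n) y := by
  refine ⟨fun n => if n < d then 0 else b (n - d), fun n => ?_, ?_⟩
  · dsimp only
    split_ifs <;> simp [hb]
  · rw [← (add_right_injective d).hasSum_iff]
    · simpa [Function.comp_def] using hsum
    · rintro n hn
      have : n < d := by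
        by_contra h
        exact hn ⟨n - d, by simp only; omega⟩
      simp [this]

lemma eventually_pos_and_mul_le_of_tendsto_ratio {r : ℕ → ℝ} (hnn : ∀ n, 0 ≤ r n)
    (hnz : ∀ᶠ n in atTop, r n ≠ 0) {L q : ℝ} (hlim : Tendsto (fun n => r (n + 1) / r n) atTop (nhds L))
    (hq : q < L) : ∀ᶠ n in atTop, 0 < r n ∧ q * r n ≤ r (n + 1) := by
  filter_upwards [hnz, hlim.eventually_const_lt hq] with n hn hlt
  have hpos := (hnn n).lt_of_ne' hn
  exact ⟨hpos, ((lt_div_iff₀ hpos).1 hlt).le⟩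

/-- if `r_n ≥ 0`, `r_n ≠ 0` for large `n`,
`r_{n+1}/r_n → L ∈ (0,1)`, and `a > 1` is an integer with `1/a < L`, `A = ⌊a/2⌋`,
then for every `N` the set of sums `∑_{n=N}^∞ b_n r_n` with integer digits
`|b_n| ≤ A` contains a nondegenerate closed interval having `0` in its interior. -/
theorem stmt11 (r : ℕ → ℝ) (hnn : ∀ n, 0 ≤ r n)
    (hnz : ∀ᶠ n in atTop, r n ≠ 0)
    (L : ℝ) (hL : L ∈ Set.Ioo (0 : ℝ) 1)
    (hlim : Tendsto (fun n => r (n + 1) / r n) atTop (nhds L))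
    (a : ℕ) (ha : 1 < a) (haL : 1 / (a : ℝ) < L) (A : ℕ) (hA : A = a / 2) :
    ∀ N : ℕ, ∃ c e : ℝ, c < 0 ∧ 0 < e ∧
      ∀ y ∈ Set.Icc c e, ∃ b : ℕ → ℤ,
        (∀ n, |b n| ≤ (A : ℤ)) ∧ HasSum (fun n : ℕ => (b n : ℝ) * r (N + n)) y := by
  intro N
  have hA0 : 0 < A := by omega
  have hqL : (2 * A + 1 : ℝ)⁻¹ < L := by
    refine lt_of_le_of_lt ?_ haL
    rw [one_div]
    gcongr
    exact_mod_cast (by omega : a ≤ 2 * A + 1)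
  have hr : Summable r := summable_of_ratio_test_tendsto_lt_one hL.2 hnz
    (by simpa [abs_of_nonneg (hnn _)] using hlim)
  obtain ⟨M, hM⟩ := (eventually_pos_and_mul_le_of_tendsto_ratio hnn hnz hlim hqL).exists_forall_of_atTop
  set w : ℕ → ℝ := fun n => r (N + (M + n))
  have hw : Summable w := (summable_nat_add_iff (N + M)).2 hr |>.congr fun n => by
    simp only [w, add_comm n, add_assoc]
  have hdom := le_two_mul_tsum_of_inv_mul_le hA0 hw fun n => (hM (N + (M + n)) (by omega)).2
  have hpos : 0 < ∑' n, w n := hw.tsum_pos (fun n => hnn _) 0 (hM _ (by omega)).1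
  refine ⟨-(A * ∑' n, w n), A * ∑' n, w n, by simp; positivity, by positivity, fun y hy => ?_⟩
  obtain ⟨b, hb, hsum⟩ := exists_hasSum_digits_of_le_two_mul_tsum (fun n => hnn _) hw hdom
    (abs_le.2 (by simpa using hy))
  exact exists_hasSum_digits_of_shift M hb hsum
end

section
/- Let P(X) = X^d + a_{d−1}X^{d−1} + ⋯ + a₀ ∈ ℤ[X] be monic irreducible with a₀ ≠ 0, having all roots of modulus different from 1 and at least one root of modulus greater than 1. Let α₁, …, α_p be the roots with |α_i| > 1 (p ≥ 1). Then 0 is an isolated point of the set L(P) = { limsup_{n→∞} ‖∑_{i=1}^{p} ξ_i α_i^n‖ : (ξ₁,…,ξ_p) chosen so that ∑ ξ_i α_i^n ∈ ℝ for all n }, where ‖x‖ denotes the distance from x to the nearest integer. More precisely, every element of L(P) smaller than 1/(2∑_{j=0}^{d}|a_j|) equals 0. -/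
/-!
The real parts `yₙ` of `∑ ξᵢ αᵢⁿ` satisfy the integer linear recurrence with characteristic
polynomial `P`. Once `‖yₙ‖ < 1 / (2 ∑ |aⱼ|)`, the integer `∑ aⱼ round(y_{n+j})` has absolute value
`< 1`, hence vanishes, so the rounding errors `uₙ = yₙ - round(yₙ)` eventually satisfy the same
recurrence. Over `ℂ`, `P(T) = c ∏ (T - β)` with `T` the shift and `|β| ≠ 1`; for a bounded sequence,
`(T - β) u → 0` forces `u → 0`, so peeling off the factors one at a time gives `uₙ → 0`.
-/

open Polynomial Finset Filter

/-- Distance from a real number to the nearest integer. -/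
noncomputable def distNearestInt (x : ℝ) : ℝ := |x - (round x : ℤ)|

/-- The multiplicative Markoff–Lagrange spectrum attached to the expanding roots
`α₁,…,α_p`: the set of `limsup_n ‖∑ ξᵢ αᵢⁿ‖` over tuples `ξ` for which
`∑ ξᵢ αᵢⁿ` is real for all `n ≥ 0`. -/
noncomputable def LagSet (p : ℕ) (α : Fin p → ℂ) : Set ℝ :=
  {ℓ | ∃ ξ : Fin p → ℂ, (∀ n : ℕ, (∑ i, ξ i * α i ^ n).im = 0) ∧
    ℓ = Filter.limsup (fun n : ℕ => distNearestInt (∑ i, ξ i * α i ^ n).re) atTop}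

open Topology Asymptotics

theorem limsup_le_mul_limsup_of_le_mul_add {a b w : ℕ → ℝ} {c : ℝ} (hc : 0 ≤ c)
    (ha : IsCoboundedUnder (· ≤ ·) atTop a) (hb : IsBoundedUnder (· ≤ ·) atTop b)
    (hw : Tendsto w atTop (𝓝 0)) (h : ∀ n, a n ≤ c * b n + w n) :
    limsup a atTop ≤ c * limsup b atTop := by
  refine le_of_forall_pos_le_add fun ε hε => ?_
  have hε' : 0 < ε / (c + 1) := by positivity
  have hbε : ∀ᶠ n in atTop, b n < limsup b atTop + ε / (c + 1) :=
    eventually_lt_of_limsup_lt (by linarith) hb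
  have hwε : ∀ᶠ n in atTop, w n < ε / (c + 1) := hw.eventually (gt_mem_nhds hε')
  calc limsup a atTop ≤ c * (limsup b atTop + ε / (c + 1)) + ε / (c + 1) := by
        refine limsup_le_of_le ha ?_
        filter_upwards [hbε, hwε] with n hbn hwn
        nlinarith [h n]
    _ = c * limsup b atTop + ε := by field_simp; ring

theorem tendsto_zero_of_limsup_le_mul {a : ℕ → ℝ} {c : ℝ} (hc : c < 1) (ha : ∀ n, 0 ≤ a n)
    (hbdd : IsBoundedUnder (· ≤ ·) atTop a) (h : limsup a atTop ≤ c * limsup a atTop) :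
    Tendsto a atTop (𝓝 0) := by
  have hL : limsup a atTop ≤ 0 := by nlinarith
  refine tendsto_order.2 ⟨fun b hb => Eventually.of_forall fun n => hb.trans_le (ha n),
    fun b hb => eventually_lt_of_limsup_lt (hL.trans_lt hb) hbdd⟩

section FirstOrder

variable {𝕜 E : Type*} [NormedField 𝕜] [SeminormedAddCommGroup E] [NormedSpace 𝕜 E]

theorem tendsto_zero_of_tendsto_sub_smul {β : 𝕜} (hβ : ‖β‖ ≠ 1) {u : ℕ → E}
    (hu : u =O[atTop] fun _ => (1 : ℝ))
    (h : Tendsto (fun n => u (n + 1) - β • u n) atTop (𝓝 0)) :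
    Tendsto u atTop (𝓝 0) := by
  set a : ℕ → ℝ := fun n => ‖u n‖
  set w : ℕ → ℝ := fun n => ‖u (n + 1) - β • u n‖
  have hw : Tendsto w atTop (𝓝 0) := tendsto_zero_iff_norm_tendsto_zero.1 h
  have ha : IsBoundedUnder (· ≤ ·) atTop a := (isBigO_one_iff ℝ).1 hu
  have ha₁ : IsBoundedUnder (· ≤ ·) atTop (fun n => a (n + 1)) :=
    (isBigO_one_iff ℝ).1 (hu.comp_tendsto (tendsto_add_atTop_nat 1))
  have hcob : ∀ b : ℕ → ℝ, (∀ n, 0 ≤ b n) → IsCoboundedUnder (· ≤ ·) atTop b :=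
    fun b hb => isCoboundedUnder_le_of_le atTop hb
  have hshift : limsup (fun n => a (n + 1)) atTop = limsup a atTop := limsup_nat_add a 1
  rw [tendsto_zero_iff_norm_tendsto_zero]
  rcases hβ.lt_or_gt with hlt | hgt
  · -- `u (n + 1) ≈ β • u n` contracts forward in time
    refine tendsto_zero_of_limsup_le_mul hlt (fun n => norm_nonneg _) ha ?_
    nth_rw 1 [← hshift]
    refine limsup_le_mul_limsup_of_le_mul_add (norm_nonneg β) (hcob _ fun n => norm_nonneg _)
      ha hw fun n => ?_
    calc a (n + 1) = ‖β • u n + (u (n + 1) - β • u n)‖ := by simp [a]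
      _ ≤ ‖β‖ * a n + w n := by grw [norm_add_le, norm_smul]
  · -- `u n ≈ β⁻¹ • u (n + 1)` contracts backward in time
    have hβ0 : β ≠ 0 := norm_pos_iff.1 (one_pos.trans hgt)
    refine tendsto_zero_of_limsup_le_mul (c := ‖β‖⁻¹) (inv_lt_one_of_one_lt₀ hgt)
      (fun n => norm_nonneg _) ha ?_
    nth_rw 2 [← hshift]
    refine limsup_le_mul_limsup_of_le_mul_add (inv_nonneg.2 (norm_nonneg β))
      (hcob _ fun n => norm_nonneg _) ha₁ (by simpa using hw.const_mul ‖β‖⁻¹) fun n => ?_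
    calc a n = ‖β⁻¹ • (u (n + 1) - (u (n + 1) - β • u n))‖ := by simp [a, smul_smul, hβ0]
      _ ≤ ‖β‖⁻¹ * a (n + 1) + ‖β‖⁻¹ * w n := by
        rw [norm_smul, norm_inv, ← mul_add]; gcongr; exact norm_sub_le _ _

end FirstOrder

section Shift

variable (𝕜 E : Type*) [CommRing 𝕜] [AddCommGroup E] [Module 𝕜 E]

noncomputable def seqShift : Module.End 𝕜 (ℕ → E) := LinearMap.funLeft 𝕜 E (· + 1)

variable {𝕜 E}

theorem seqShift_pow_apply (k : ℕ) (u : ℕ → E) (n : ℕ) : (seqShift 𝕜 E ^ k) u n = u (n + k) := by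
  induction k generalizing u n with
  | zero => rfl
  | succ k ih => rw [pow_succ, Module.End.mul_apply, ih]; rfl

theorem aeval_seqShift_apply (Q : 𝕜[X]) (u : ℕ → E) (n : ℕ) :
    aeval (seqShift 𝕜 E) Q u n = ∑ j ∈ range (Q.natDegree + 1), Q.coeff j • u (n + j) := by
  simp [aeval_eq_sum_range, Finset.sum_apply, seqShift_pow_apply]

theorem aeval_seqShift_X_sub_C (β : 𝕜) (u : ℕ → E) :
    aeval (seqShift 𝕜 E) (X - C β) u = fun n => u (n + 1) - β • u n := by
  ext n; simp [seqShift]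

theorem aeval_seqShift_geom [Nontrivial 𝕜] (Q : 𝕜[X]) (α : 𝕜) :
    aeval (seqShift 𝕜 𝕜) Q (fun n => α ^ n) = Q.eval α • fun n => α ^ n := by
  refine Module.End.aeval_apply_of_hasEigenvector ⟨?_, fun h => by simpa using congrFun h 0⟩
  rw [Module.End.mem_genEigenspace_one]
  ext n; simp [seqShift, pow_succ']

end Shift

section Hyperbolic

variable {𝕜 E : Type*} [NormedField 𝕜] [SeminormedAddCommGroup E] [NormedSpace 𝕜 E]

theorem tendsto_zero_of_tendsto_aeval_seqShift_prod (s : Multiset 𝕜) (hs : ∀ β ∈ s, ‖β‖ ≠ 1)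
    {u : ℕ → E} (hu : u =O[atTop] fun _ => (1 : ℝ))
    (h : Tendsto (aeval (seqShift 𝕜 E) (s.map fun β => X - C β).prod u) atTop (𝓝 0)) :
    Tendsto u atTop (𝓝 0) := by
  induction s using Multiset.induction_on generalizing u with
  | empty => simpa using h
  | cons β s ih =>
    have hv : (fun n => u (n + 1) - β • u n) =O[atTop] fun _ => (1 : ℝ) :=
      (hu.comp_tendsto (tendsto_add_atTop_nat 1)).sub (hu.const_smul_left β)
    refine tendsto_zero_of_tendsto_sub_smul (hs β (Multiset.mem_cons_self β s)) hu ?_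
    refine ih (fun γ hγ => hs γ (Multiset.mem_cons_of_mem hγ)) hv ?_
    rwa [Multiset.map_cons, Multiset.prod_cons, mul_comm, map_mul, Module.End.mul_apply,
      aeval_seqShift_X_sub_C] at h

theorem tendsto_zero_of_tendsto_aeval_seqShift [IsAlgClosed 𝕜] {Q : 𝕜[X]} (hQ : Q ≠ 0)
    (hroots : ∀ z, Q.IsRoot z → ‖z‖ ≠ 1) {u : ℕ → E} (hu : u =O[atTop] fun _ => (1 : ℝ))
    (h : Tendsto (aeval (seqShift 𝕜 E) Q u) atTop (𝓝 0)) :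
    Tendsto u atTop (𝓝 0) := by
  refine tendsto_zero_of_tendsto_aeval_seqShift_prod Q.roots
    (fun β hβ => hroots β (isRoot_of_mem_roots hβ)) hu ?_
  have hlead : Q.leadingCoeff ≠ 0 := leadingCoeff_ne_zero.2 hQ
  conv at h => rw [(IsAlgClosed.splits Q).eq_prod_roots, map_mul, Module.End.mul_apply, aeval_C]
  simpa [hlead] using h.const_smul Q.leadingCoeff⁻¹

end Hyperbolic

theorem sum_mul_round_eq_zero {ι : Type*} (s : Finset ι) (a : ι → ℤ) (y : ι → ℝ)
    (hy : ∑ i ∈ s, a i * y i = 0) (hsmall : ∑ i ∈ s, |(a i : ℝ)| * distNearestInt (y i) < 1) :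
    ∑ i ∈ s, a i * round (y i) = 0 := by
  rw [← Int.abs_lt_one_iff, ← Int.cast_lt (R := ℝ)]
  have hK : ((∑ i ∈ s, a i * round (y i) : ℤ) : ℝ) = -∑ i ∈ s, a i * (y i - round (y i)) := by
    push_cast
    simp only [mul_sub, sum_sub_distrib, hy, zero_sub, neg_neg]
  calc ((|∑ i ∈ s, a i * round (y i)| : ℤ) : ℝ) = |∑ i ∈ s, a i * (y i - round (y i))| := by
        rw [Int.cast_abs, hK, abs_neg]
    _ ≤ ∑ i ∈ s, |(a i : ℝ)| * distNearestInt (y i) :=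
        (abs_sum_le_sum_abs _ _).trans_eq (sum_congr rfl fun i _ => abs_mul _ _)
    _ < _ := by exact_mod_cast hsmall

theorem tendsto_distNearestInt_of_recurrence {P : ℤ[X]} (hP : P ≠ 0)
    (hroots : ∀ z : ℂ, aeval z P = 0 → ‖z‖ ≠ 1) {y : ℕ → ℝ}
    (hy : ∀ n, ∑ j ∈ range (P.natDegree + 1), P.coeff j * y (n + j) = 0)
    (hsmall : ∀ᶠ n in atTop,
      distNearestInt (y n) ≤ 1 / (2 * ∑ j ∈ range (P.natDegree + 1), (|P.coeff j| : ℝ))) :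
    Tendsto (fun n => distNearestInt (y n)) atTop (𝓝 0) := by
  set S := ∑ j ∈ range (P.natDegree + 1), (|P.coeff j| : ℝ)
  set Q := P.map (algebraMap ℤ ℂ)
  have hQdeg : Q.natDegree = P.natDegree :=
    natDegree_map_eq_of_injective (algebraMap ℤ ℂ).injective_int P
  set u : ℕ → ℂ := fun n => ((y n - round (y n) : ℝ) : ℂ)
  have hnorm : ∀ n, ‖u n‖ = distNearestInt (y n) := fun n => by
    rw [Complex.norm_real, Real.norm_eq_abs]; rfl
  have hround :
      ∀ᶠ n in atTop, ∑ j ∈ range (P.natDegree + 1), P.coeff j * round (y (n + j)) = 0 := by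
    obtain ⟨N, hN⟩ := eventually_atTop.1 hsmall
    refine eventually_atTop.2 ⟨N, fun n hn => sum_mul_round_eq_zero _ _ _ (hy n) ?_⟩
    calc ∑ j ∈ range (P.natDegree + 1), |(P.coeff j : ℝ)| * distNearestInt (y (n + j))
        ≤ ∑ j ∈ range (P.natDegree + 1), |(P.coeff j : ℝ)| * (1 / (2 * S)) :=
          sum_le_sum fun j _ => by gcongr; exact hN _ (by omega)
      _ = S / (2 * S) := by rw [← sum_mul, mul_one_div]
      _ < 1 := by
        rcases eq_or_ne S 0 with hS | hS
        · simp [hS]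
        · rw [mul_comm, ← div_div, div_self hS]; norm_num
  have hQu : ∀ᶠ n in atTop, aeval (seqShift ℂ ℂ) Q u n = 0 := by
    filter_upwards [hround] with n hn
    calc aeval (seqShift ℂ ℂ) Q u n
        = ((∑ j ∈ range (P.natDegree + 1), P.coeff j * y (n + j) -
            ((∑ j ∈ range (P.natDegree + 1), P.coeff j * round (y (n + j)) : ℤ) : ℝ) : ℝ) : ℂ) := by
          rw [aeval_seqShift_apply, hQdeg]; push_cast; simp [Q, u, mul_sub]
      _ = 0 := by rw [hy n, hn]; simp
  have hu : Tendsto u atTop (𝓝 0) := by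
    refine tendsto_zero_of_tendsto_aeval_seqShift ((Polynomial.map_ne_zero_iff
      (algebraMap ℤ ℂ).injective_int).2 hP) (fun z hz => hroots z ?_) ?_
      (tendsto_const_nhds.congr' (hQu.mono fun n h => h.symm))
    · rwa [IsRoot.def, eval_map_algebraMap] at hz
    · refine (isBigO_one_iff ℝ).2 (isBoundedUnder_of ⟨1 / 2, fun n => ?_⟩)
      exact (hnorm n).le.trans (abs_sub_round (y n))
  simpa only [hnorm, norm_zero] using hu.norm

theorem stmt12_general (P : Polynomial ℤ) (hmonic : P.Monic)
    (hhyp : ∀ z : ℂ, Polynomial.aeval z P = 0 → ‖z‖ ≠ 1)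
    (p : ℕ) (α : Fin p → ℂ)
    (hroot : ∀ i, Polynomial.aeval (α i) P = 0) :
    (0 : ℝ) ∈ LagSet p α ∧
    ∀ ℓ ∈ LagSet p α,
      ℓ < 1 / (2 * ∑ j ∈ Finset.range (P.natDegree + 1), (|P.coeff j| : ℝ)) →
      ℓ = 0 := by
  refine ⟨⟨0, by simp, by simp [distNearestInt]⟩, ?_⟩
  rintro ℓ ⟨ξ, -, rfl⟩ hlt
  set x : ℕ → ℂ := fun n => ∑ i, ξ i * α i ^ n
  have hx : aeval (seqShift ℂ ℂ) (P.map (algebraMap ℤ ℂ)) x = 0 := by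
    have hgeom : x = ∑ i, ξ i • fun n => α i ^ n := by ext n; simp [x]
    rw [hgeom, map_sum]
    refine sum_eq_zero fun i _ => ?_
    rw [map_smul, aeval_seqShift_geom, eval_map_algebraMap, hroot, zero_smul, smul_zero]
  have hy : ∀ n, ∑ j ∈ range (P.natDegree + 1), P.coeff j * (x (n + j)).re = 0 := fun n => by
    have hxn := congrFun hx n
    rw [aeval_seqShift_apply, natDegree_map_eq_of_injective (algebraMap ℤ ℂ).injective_int] at hxn
    simpa [Complex.re_sum] using congrArg Complex.re hxn
  have hbdd : IsBoundedUnder (· ≤ ·) atTop fun n => distNearestInt (x n).re :=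
    isBoundedUnder_of ⟨1 / 2, fun n => abs_sub_round _⟩
  exact (tendsto_distNearestInt_of_recurrence hmonic.ne_zero hhyp hy
    ((eventually_lt_of_limsup_lt hlt hbdd).mono fun _ => le_of_lt)).limsup_eq

/-- for a monic irreducible hyperbolic `P ∈ ℤ[X]` with nonzero
constant term, with `α₁,…,α_p` (`p ≥ 1`) its roots of modulus `> 1`, the point `0`
is isolated in `L(P)`: `0 ∈ L(P)` and every element of `L(P)` smaller than
`1/(2 ∑_j |a_j|)` equals `0`. -/
theorem stmt12 (P : Polynomial ℤ) (hmonic : P.Monic) (hirr : Irreducible P)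
    (h0 : P.coeff 0 ≠ 0)
    (hhyp : ∀ z : ℂ, Polynomial.aeval z P = 0 → ‖z‖ ≠ 1)
    (p : ℕ) (hp : 1 ≤ p) (α : Fin p → ℂ)
    (hinj : Function.Injective α)
    (hroot : ∀ i, Polynomial.aeval (α i) P = 0)
    (hbig : ∀ i, 1 < ‖α i‖)
    (hall : ∀ z : ℂ, Polynomial.aeval z P = 0 → 1 < ‖z‖ → ∃ i, α i = z) :
    (0 : ℝ) ∈ LagSet p α ∧
    ∀ ℓ ∈ LagSet p α,
      ℓ < 1 / (2 * ∑ j ∈ Finset.range (P.natDegree + 1), (|P.coeff j| : ℝ)) →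
      ℓ = 0 :=
  stmt12_general P hmonic hhyp p α hroot
end

section
/- Let (μ_j)_{j≥0} be real numbers with 0 < μ_{j+1} ≤ μ_j/2 for all j ≥ 0. For a bounded integer sequence t = (t_j)_{j≥0}, write (t)_μ = ∑_{j=0}^∞ μ_j t_j. Define the order on sequences over {0,1}: t > t′ iff (−1)^h(t_h − t_h′) > 0 where h is the first index of disagreement, and let Φ(t₀t₁t₂…) = 1 0^{t₀} (−1) 0^{t₁} 1 0^{t₂} (−1) …. Then for any two infinite {0,1}-sequences t, t′ with t > t′, one has (Φ(t))_μ > (Φ(t′))_μ. -/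
open Finset

/-- Position of the `k`-th nonzero entry (of sign `(-1)^k`) in the sequence
`Φ(t₀t₁t₂…) = 1 0^{t₀} (-1) 0^{t₁} 1 0^{t₂} (-1) …`. -/
def phiPos (t : ℕ → ℕ) (k : ℕ) : ℕ := k + ∑ i ∈ Finset.range k, t i

/-- The value `(Φ(t))_μ = ∑_j μ_j (Φ(t))_j = ∑_k (-1)^k μ(phiPos t k)`. -/
noncomputable def phiVal (μ : ℕ → ℝ) (t : ℕ → ℕ) : ℝ :=
  ∑' k : ℕ, (-1 : ℝ) ^ k * μ (phiPos t k)

lemma phiPos_succ (t : ℕ → ℕ) (k : ℕ) : phiPos t (k + 1) = phiPos t k + 1 + t k := by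
  simp [phiPos, Finset.sum_range_succ]; ring

/-- geometric-domination summability -/
lemma half_summable {c : ℕ → ℝ} (hpos : ∀ m, 0 < c m) (hh : ∀ m, c (m + 1) ≤ c m / 2) :
    Summable c := by
  have hb : ∀ m, c m ≤ c 0 * (1 / 2 : ℝ) ^ m := by
    intro m
    induction m with
    | zero => simp
    | succ n ih =>
      calc c (n + 1) ≤ c n / 2 := hh n
        _ ≤ (c 0 * (1 / 2 : ℝ) ^ n) / 2 := by linarith
        _ = c 0 * (1 / 2 : ℝ) ^ (n + 1) := by ring
  exact Summable.of_nonneg_of_le (fun m => (hpos m).le) hb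
    ((summable_geometric_of_lt_one (by norm_num) (by norm_num)).mul_left _)

/-- Alternating series bounds for a (strictly) halving positive sequence. -/
lemma alt_bounds {c : ℕ → ℝ} (hpos : ∀ m, 0 < c m) (hh : ∀ m, c (m + 1) ≤ c m / 2) :
    c 0 - c 1 < ∑' n : ℕ, (-1 : ℝ) ^ n * c n ∧ (∑' n : ℕ, (-1 : ℝ) ^ n * c n) < c 0 := by
  have hsum : Summable c := half_summable hpos hh
  have hlt : ∀ m, c (m + 1) < c m := fun m => (hh m).trans_lt (by have := hpos m; linarith)
  have hanti : StrictAnti c := strictAnti_nat_of_succ_lt hlt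
  have hse : Summable fun k => c (2 * k) :=
    hsum.comp_injective (fun a b hab => by omega)
  have hso : Summable fun k => c (2 * k + 1) :=
    hsum.comp_injective (fun a b hab => by omega)
  have hse' : Summable fun k => c (2 * (k + 1)) :=
    hsum.comp_injective (fun a b hab => by omega)
  have hfe : Summable fun k => (-1 : ℝ) ^ (2 * k) * c (2 * k) := by
    simpa [pow_mul] using hse
  have hfo : Summable fun k => (-1 : ℝ) ^ (2 * k + 1) * c (2 * k + 1) := by
    have : Summable fun k => -c (2 * k + 1) := hso.neg
    simpa [pow_succ, pow_mul] using this
  have hsplit := tsum_even_add_odd (f := fun n => (-1 : ℝ) ^ n * c n) hfe hfo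
  have he1 : (∑' k : ℕ, (-1 : ℝ) ^ (2 * k) * c (2 * k)) = ∑' k : ℕ, c (2 * k) := by
    apply tsum_congr; intro k; simp [pow_mul]
  have ho1 : (∑' k : ℕ, (-1 : ℝ) ^ (2 * k + 1) * c (2 * k + 1)) = -∑' k : ℕ, c (2 * k + 1) := by
    rw [← tsum_neg]; apply tsum_congr; intro k; simp [pow_succ, pow_mul]
  have hL : (∑' n : ℕ, (-1 : ℝ) ^ n * c n)
      = (∑' k : ℕ, c (2 * k)) - ∑' k : ℕ, c (2 * k + 1) := by
    rw [← hsplit, he1, ho1]; ring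
  constructor
  · -- lower bound
    have hdsum : Summable fun k => c (2 * k) - c (2 * k + 1) := hse.sub hso
    have hdiff : (∑' k : ℕ, c (2 * k)) - (∑' k : ℕ, c (2 * k + 1))
        = ∑' k : ℕ, (c (2 * k) - c (2 * k + 1)) := (Summable.tsum_sub hse hso).symm
    have hge : ∑ k ∈ range 2, (c (2 * k) - c (2 * k + 1)) ≤
        ∑' k : ℕ, (c (2 * k) - c (2 * k + 1)) := by
      apply Summable.sum_le_tsum _ (fun i _ => ?_) hdsum
      have := hanti (Nat.lt_succ_self (2 * i))
      linarith [hlt (2 * i)]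
    have h2 : ∑ k ∈ range 2, (c (2 * k) - c (2 * k + 1)) = (c 0 - c 1) + (c 2 - c 3) := by
      norm_num [Finset.sum_range_succ]; ring
    have h23 : c 3 < c 2 := hlt 2
    rw [hL, hdiff]
    have := hge
    rw [h2] at this
    linarith
  · -- upper bound
    have hshift : (∑' k : ℕ, c (2 * k)) = c 0 + ∑' k : ℕ, c (2 * (k + 1)) := by
      have := Summable.tsum_eq_zero_add (f := fun k => c (2 * k)) hse
      simpa using this
    have hdsum : Summable fun k => c (2 * k + 1) - c (2 * (k + 1)) := hso.sub hse'
    have hdiff : (∑' k : ℕ, c (2 * k + 1)) - (∑' k : ℕ, c (2 * (k + 1)))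
        = ∑' k : ℕ, (c (2 * k + 1) - c (2 * (k + 1))) := (Summable.tsum_sub hso hse').symm
    have hposd : 0 < ∑' k : ℕ, (c (2 * k + 1) - c (2 * (k + 1))) := by
      apply Summable.tsum_pos hdsum (fun i => ?_) 0
      · have := hlt 1; norm_num; linarith
      · have := hlt (2 * i + 1)
        have h2 : 2 * (i + 1) = 2 * i + 1 + 1 := by ring
        rw [h2]; linarith
    rw [hL]
    nlinarith [hshift, hdiff]

section keysec

variable {μ : ℕ → ℝ}

lemma mu_anti (hpos : ∀ j, 0 < μ j) (hhalf : ∀ j, μ (j + 1) ≤ μ j / 2) :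
    ∀ a b : ℕ, a ≤ b → μ b ≤ μ a := by
  have : StrictAnti μ := strictAnti_nat_of_succ_lt
    (fun n => (hhalf n).trans_lt (by have := hpos n; linarith))
  exact fun a b hab => this.antitone hab

lemma mu_step (hpos : ∀ j, 0 < μ j) (hhalf : ∀ j, μ (j + 1) ≤ μ j / 2) :
    ∀ a b : ℕ, a + 1 ≤ b → μ b ≤ μ a / 2 :=
  fun a b hab => (mu_anti hpos hhalf _ _ hab).trans (hhalf a)

/-- halving property of the tail coefficient sequence -/
lemma tail_half (hpos : ∀ j, 0 < μ j) (hhalf : ∀ j, μ (j + 1) ≤ μ j / 2)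
    (x : ℕ → ℕ) (h : ℕ) (m : ℕ) :
    μ (phiPos x (m + 1 + (h + 1))) ≤ μ (phiPos x (m + (h + 1))) / 2 := by
  have he : m + 1 + (h + 1) = (m + (h + 1)) + 1 := by ring
  rw [he, phiPos_succ]
  exact mu_step hpos hhalf _ _ (by omega)

/-- key lemma: comparing the tails beyond the first disagreement, where `u`
has digit `1` at `h` and `v` has digit `0` at `h`. -/
lemma key_lemma (hpos : ∀ j, 0 < μ j) (hhalf : ∀ j, μ (j + 1) ≤ μ j / 2)
    (u v : ℕ → ℕ) (h : ℕ) (hagree : ∀ i < h, u i = v i) (hu : u h = 1) (hv : v h = 0) :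
    (∑' m : ℕ, (-1 : ℝ) ^ m * μ (phiPos u (m + (h + 1)))) <
      ∑' m : ℕ, (-1 : ℝ) ^ m * μ (phiPos v (m + (h + 1))) := by
  have hpp : phiPos u h = phiPos v h := by
    unfold phiPos
    congr 1
    exact Finset.sum_congr rfl (fun i hi => hagree i (Finset.mem_range.mp hi))
  set p := phiPos v h with hp
  -- values of the first positions
  have hu0 : phiPos u (0 + (h + 1)) = p + 2 := by
    have : (0 : ℕ) + (h + 1) = h + 1 := by omega
    rw [this, phiPos_succ, hpp, hu]
  have hv0 : phiPos v (0 + (h + 1)) = p + 1 := by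
    have : (0 : ℕ) + (h + 1) = h + 1 := by omega
    rw [this, phiPos_succ, hv]
  have hv1 : p + 2 ≤ phiPos v (1 + (h + 1)) := by
    have : (1 : ℕ) + (h + 1) = (h + 1) + 1 := by omega
    rw [this, phiPos_succ]
    have := hv0
    simp only [Nat.zero_add] at this ⊢
    omega
  have hcu := alt_bounds (c := fun m => μ (phiPos u (m + (h + 1))))
    (fun m => hpos _) (fun m => tail_half hpos hhalf u h m)
  have hcv := alt_bounds (c := fun m => μ (phiPos v (m + (h + 1))))
    (fun m => hpos _) (fun m => tail_half hpos hhalf v h m)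
  have h1 : (∑' m : ℕ, (-1 : ℝ) ^ m * μ (phiPos u (m + (h + 1)))) < μ (p + 2) := by
    have := hcu.2
    rwa [hu0] at this
  have h2 : μ (p + 1) - μ (phiPos v (1 + (h + 1))) <
      ∑' m : ℕ, (-1 : ℝ) ^ m * μ (phiPos v (m + (h + 1))) := by
    have := hcv.1
    rwa [hv0] at this
  have h3 : μ (phiPos v (1 + (h + 1))) ≤ μ (p + 2) := mu_anti hpos hhalf _ _ hv1
  have h4 : μ (p + 2) ≤ μ (p + 1) / 2 := hhalf (p + 1)
  linarith

lemma summable_phi (hpos : ∀ j, 0 < μ j) (hhalf : ∀ j, μ (j + 1) ≤ μ j / 2) (x : ℕ → ℕ) :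
    Summable fun k => (-1 : ℝ) ^ k * μ (phiPos x k) := by
  have hs : Summable fun k => μ (phiPos x k) := by
    apply half_summable (fun m => hpos _)
    intro m
    rw [phiPos_succ]
    exact mu_step hpos hhalf _ _ (by omega)
  apply Summable.of_abs
  have : (fun k => |(-1 : ℝ) ^ k * μ (phiPos x k)|) = fun k => μ (phiPos x k) := by
    funext k
    rw [abs_mul, abs_pow, abs_neg, abs_one, one_pow, one_mul,
      abs_of_pos (hpos _)]
  rw [this]; exact hs

/-- splitting `phiVal` into head and tail at index `h+1` -/
lemma phiVal_split (hpos : ∀ j, 0 < μ j) (hhalf : ∀ j, μ (j + 1) ≤ μ j / 2)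
    (x : ℕ → ℕ) (h : ℕ) :
    phiVal μ x = (∑ k ∈ range (h + 1), (-1 : ℝ) ^ k * μ (phiPos x k)) +
      (-1 : ℝ) ^ (h + 1) * ∑' m : ℕ, (-1 : ℝ) ^ m * μ (phiPos x (m + (h + 1))) := by
  have hsum := summable_phi hpos hhalf x
  have := (Summable.sum_add_tsum_nat_add (f := fun k => (-1 : ℝ) ^ k * μ (phiPos x k)) (h + 1) hsum).symm
  rw [phiVal, this]
  congr 1
  rw [← tsum_mul_left]
  apply tsum_congr
  intro m
  rw [pow_add]
  ring

end keysec

/-- if `0 < μ_{j+1} ≤ μ_j/2` for all `j`, and `t > t'` are infinite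
`{0,1}`-sequences in the alternating order (at the first index `h` of disagreement
`(-1)^h (t_h - t'_h) > 0`), then `(Φ(t'))_μ < (Φ(t))_μ`. -/
theorem stmt15 (μ : ℕ → ℝ) (hpos : ∀ j, 0 < μ j)
    (hhalf : ∀ j, μ (j + 1) ≤ μ j / 2)
    (t t' : ℕ → ℕ) (ht : ∀ n, t n ≤ 1) (ht' : ∀ n, t' n ≤ 1)
    (hgt : ∃ h : ℕ, (∀ i < h, t i = t' i) ∧ t h ≠ t' h ∧
      0 < (-1 : ℝ) ^ h * ((t h : ℝ) - (t' h : ℝ))) :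
    phiVal μ t' < phiVal μ t := by
  obtain ⟨h, hagree, hne, hsign⟩ := hgt
  -- head sums agree
  have hhead : ∀ k ∈ range (h + 1),
      (-1 : ℝ) ^ k * μ (phiPos t k) = (-1 : ℝ) ^ k * μ (phiPos t' k) := by
    intro k hk
    have hk' : k ≤ h := by simpa [Nat.lt_succ_iff] using Finset.mem_range.mp hk
    congr 2
    unfold phiPos
    congr 1
    exact Finset.sum_congr rfl (fun i hi => hagree i (lt_of_lt_of_le (Finset.mem_range.mp hi) hk'))
  have hsplit_t := phiVal_split hpos hhalf t h
  have hsplit_t' := phiVal_split hpos hhalf t' h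
  have hheadsum : (∑ k ∈ range (h + 1), (-1 : ℝ) ^ k * μ (phiPos t k))
      = ∑ k ∈ range (h + 1), (-1 : ℝ) ^ k * μ (phiPos t' k) := Finset.sum_congr rfl hhead
  rcases Nat.even_or_odd h with heven | hodd
  · -- h even: t h = 1, t' h = 0
    have hsign' : (0 : ℝ) < (t h : ℝ) - (t' h : ℝ) := by
      rwa [heven.neg_one_pow, one_mul] at hsign
    have hth : t h = 1 ∧ t' h = 0 := by
      have h1 := ht h; have h2 := ht' h
      have : (t' h : ℝ) < (t h : ℝ) := by linarith
      have : t' h < t h := by exact_mod_cast this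
      omega
    have hkey := key_lemma hpos hhalf t t' h hagree hth.1 hth.2
    have hpow : (-1 : ℝ) ^ (h + 1) = -1 := by
      rw [pow_succ, heven.neg_one_pow]; ring
    rw [hsplit_t, hsplit_t', hheadsum, hpow]
    linarith
  · -- h odd: t h = 0, t' h = 1
    have hsign' : (0 : ℝ) < (t' h : ℝ) - (t h : ℝ) := by
      rw [hodd.neg_one_pow] at hsign; linarith
    have hth : t' h = 1 ∧ t h = 0 := by
      have h1 := ht h; have h2 := ht' h
      have : (t h : ℝ) < (t' h : ℝ) := by linarith
      have : t h < t' h := by exact_mod_cast this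
      omega
    have hkey := key_lemma hpos hhalf t' t h (fun i hi => (hagree i hi).symm) hth.1 hth.2
    have hpow : (-1 : ℝ) ^ (h + 1) = 1 := by
      rw [pow_succ, hodd.neg_one_pow]; ring
    rw [hsplit_t, hsplit_t', hheadsum, hpow]
    linarith
end
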